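/- With X̂, Ŷ defined from (X,Y,i,j) as X̂ = [[0,−j₂],[i₁,X]], Ŷ = [[0,j₁],[i₂,Y]], the quadruple (X,Y,i,j) is stable (there is no proper subspace S ⊊ ℂ^k with im i ⊆ S, XS ⊆ S, YS ⊆ S) if and only if e₁ ∈ ℂ^{k+1} is a cyclic vector for the pair (X̂,Ŷ). -/

import Mathlib

/-!
Let `π : ℂ^{k+1} → ℂ^k` forget the first coordinate. The block form of `X̂` gives
`π (X̂ w) = X (π w) + w₁ • i₁` (and likewise for `Ŷ`), so `S ↦ π⁻¹ S` and `T ↦ π T` are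
mutually inverse bijections between subspaces `S ⊆ ℂ^k` containing `im i` and invariant
under `X, Y`, and `(X̂, Ŷ)`-invariant subspaces `T ∋ e₁` (these are exactly the `T ⊇ ker π`).
Proper subspaces correspond to proper subspaces, which gives the equivalence.
-/

open Matrix

def rowm {k : ℕ} (v : Fin k → ℂ) : Matrix (Fin 1) (Fin k) ℂ := Matrix.of fun _ c => v c

def colm {k : ℕ} (v : Fin k → ℂ) : Matrix (Fin k) (Fin 1) ℂ := Matrix.of fun r _ => v r

def hatX {k : ℕ} (X : Matrix (Fin k) (Fin k) ℂ) (i : Matrix (Fin k) (Fin 2) ℂ)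
    (j : Matrix (Fin 2) (Fin k) ℂ) : Matrix (Fin 1 ⊕ Fin k) (Fin 1 ⊕ Fin k) ℂ :=
  Matrix.fromBlocks 0 (-(rowm (fun c => j 1 c))) (colm (fun r => i r 0)) X

def hatY {k : ℕ} (Y : Matrix (Fin k) (Fin k) ℂ) (i : Matrix (Fin k) (Fin 2) ℂ)
    (j : Matrix (Fin 2) (Fin k) ℂ) : Matrix (Fin 1 ⊕ Fin k) (Fin 1 ⊕ Fin k) ℂ :=
  Matrix.fromBlocks 0 (rowm (fun c => j 0 c)) (colm (fun r => i r 1)) Y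

/-- `(X,Y,i)` is stable: no proper subspace S contains the columns of i and is invariant
under X and Y. -/
def Stable {k : ℕ} (X Y : Matrix (Fin k) (Fin k) ℂ) (i : Matrix (Fin k) (Fin 2) ℂ) : Prop :=
  ¬ ∃ S : Submodule ℂ (Fin k → ℂ), S ≠ ⊤ ∧ (∀ c : Fin 2, (fun r => i r c) ∈ S) ∧
      (∀ x ∈ S, X.mulVec x ∈ S) ∧ (∀ x ∈ S, Y.mulVec x ∈ S)

/-- cyclicity of a vector for a pair of matrices on an arbitrary finite index type -/
def IsCyclicVec {I : Type} [Fintype I] [DecidableEq I] (A B : Matrix I I ℂ) (v : I → ℂ) : Prop :=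
  ∀ S : Submodule ℂ (I → ℂ), v ∈ S → (∀ x ∈ S, A.mulVec x ∈ S) →
    (∀ x ∈ S, B.mulVec x ∈ S) → S = ⊤

open LinearMap

section BlockInvariance

variable {R m n : Type*} [CommRing R] [Fintype m] [Fintype n]

theorem comp_inr_fromBlocks_mulVec (A : Matrix m m R) (B : Matrix m n R) (C : Matrix n m R)
    (D : Matrix n n R) (w : m ⊕ n → R) :
    (fromBlocks A B C D *ᵥ w) ∘ Sum.inr = C *ᵥ (w ∘ Sum.inl) + D *ᵥ (w ∘ Sum.inr) := by
  rw [fromBlocks_mulVec]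
  rfl

variable {A : Matrix m m R} {B : Matrix m n R} {C : Matrix n m R} {D : Matrix n n R}

theorem fromBlocks_mulVec_mem_comap_funLeft_inr {S : Submodule R (n → R)}
    (hC : ∀ u, C *ᵥ u ∈ S) (hD : ∀ x ∈ S, D *ᵥ x ∈ S) :
    ∀ w ∈ S.comap (funLeft R R Sum.inr),
      fromBlocks A B C D *ᵥ w ∈ S.comap (funLeft R R Sum.inr) := by
  intro w hw
  change (fromBlocks A B C D *ᵥ w) ∘ Sum.inr ∈ S
  rw [comp_inr_fromBlocks_mulVec]
  exact S.add_mem (hC _) (hD _ hw)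

theorem mulVec_mem_map_funLeft_inr {T : Submodule R (m ⊕ n → R)}
    (hker : ker (funLeft R R (Sum.inr : n → m ⊕ n)) ≤ T)
    (hT : ∀ w ∈ T, fromBlocks A B C D *ᵥ w ∈ T) (u : m → R) :
    C *ᵥ u ∈ T.map (funLeft R R Sum.inr) := by
  refine ⟨fromBlocks A B C D *ᵥ Sum.elim u 0, hT _ (hker (funext fun _ => rfl)), ?_⟩
  change (fromBlocks A B C D *ᵥ Sum.elim u 0) ∘ Sum.inr = _
  simp [comp_inr_fromBlocks_mulVec]

theorem mulVec_mem_map_funLeft_inr_of_mem {T : Submodule R (m ⊕ n → R)}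
    (hker : ker (funLeft R R (Sum.inr : n → m ⊕ n)) ≤ T)
    (hT : ∀ w ∈ T, fromBlocks A B C D *ᵥ w ∈ T) :
    ∀ x ∈ T.map (funLeft R R Sum.inr), D *ᵥ x ∈ T.map (funLeft R R Sum.inr) := by
  rintro _ ⟨w, hw, rfl⟩
  have h := Submodule.mem_map_of_mem (f := funLeft R R Sum.inr) (hT w hw)
  change (fromBlocks A B C D *ᵥ w) ∘ Sum.inr ∈ _ at h
  rw [comp_inr_fromBlocks_mulVec] at h
  change D *ᵥ (w ∘ Sum.inr) ∈ _
  simpa using sub_mem h (mulVec_mem_map_funLeft_inr hker hT (w ∘ Sum.inl))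

end BlockInvariance

theorem ker_funLeft_inr_eq_span {R n : Type*} [CommRing R] [DecidableEq n] :
    ker (funLeft R R (Sum.inr : n → Fin 1 ⊕ n)) = R ∙ Pi.single (Sum.inl 0) 1 := by
  ext w
  rw [mem_ker, Submodule.mem_span_singleton]
  constructor
  · intro hw
    refine ⟨w (Sum.inl 0), funext fun x => ?_⟩
    rcases x with a | r
    · simp [Subsingleton.elim a 0]
    · simpa using (congrFun hw r).symm
  · rintro ⟨a, rfl⟩
    ext
    simp

theorem colm_mulVec {k : ℕ} (v : Fin k → ℂ) (u : Fin 1 → ℂ) : colm v *ᵥ u = u 0 • v := by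
  ext r
  simp [colm, mulVec, dotProduct, mul_comm]

theorem forall_colm_mulVec_mem_iff {k : ℕ} {v : Fin k → ℂ} {S : Submodule ℂ (Fin k → ℂ)} :
    (∀ u, colm v *ᵥ u ∈ S) ↔ v ∈ S := by
  simp_rw [colm_mulVec]
  exact ⟨fun h => by simpa using h 1, fun h u => S.smul_mem _ h⟩

/-- (X,Y,i,j) is stable iff e₁ ∈ ℂ^{k+1} is cyclic for (X̂,Ŷ). -/
theorem stmt8 (k : ℕ) (X Y : Matrix (Fin k) (Fin k) ℂ) (i : Matrix (Fin k) (Fin 2) ℂ)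
    (j : Matrix (Fin 2) (Fin k) ℂ) :
    Stable X Y i ↔
      IsCyclicVec (hatX X i j) (hatY Y i j)
        (fun x : Fin 1 ⊕ Fin k => if x = Sum.inl 0 then (1 : ℂ) else 0) := by
  set π := funLeft ℂ ℂ (Sum.inr : Fin k → Fin 1 ⊕ Fin k)
  have hπ : Function.Surjective π := funLeft_surjective_of_injective _ _ _ Sum.inr_injective
  have he : (fun x : Fin 1 ⊕ Fin k => if x = Sum.inl 0 then (1 : ℂ) else 0) =
      Pi.single (Sum.inl 0) 1 := by
    ext x
    simp [Pi.single_apply]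
  rw [he]
  constructor
  · intro hst T heT hX hY
    have hker : ker π ≤ T := by
      rwa [ker_funLeft_inr_eq_span, Submodule.span_singleton_le_iff_mem]
    have hS : T.map π = ⊤ := by
      by_contra hne
      refine hst ⟨T.map π, hne, Fin.forall_fin_two.2 ⟨?_, ?_⟩,
        mulVec_mem_map_funLeft_inr_of_mem hker hX, mulVec_mem_map_funLeft_inr_of_mem hker hY⟩
      · exact forall_colm_mulVec_mem_iff.1 (mulVec_mem_map_funLeft_inr hker hX)
      · exact forall_colm_mulVec_mem_iff.1 (mulVec_mem_map_funLeft_inr hker hY)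
    rw [← sup_eq_left.2 hker, ← Submodule.comap_map_eq, hS, Submodule.comap_top]
  · rintro hcyc ⟨S, hne, hi, hX, hY⟩
    have hT := hcyc (S.comap π) (ker_le_comap π <| by
      rw [ker_funLeft_inr_eq_span]; exact Submodule.mem_span_singleton_self _)
      (fromBlocks_mulVec_mem_comap_funLeft_inr (forall_colm_mulVec_mem_iff.2 (hi 0)) hX)
      (fromBlocks_mulVec_mem_comap_funLeft_inr (forall_colm_mulVec_mem_iff.2 (hi 1)) hY)
    apply hne
    rw [← Submodule.map_comap_eq_of_surjective hπ S, hT, Submodule.map_top, range_eq_top.2 hπ]
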